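/- There is an absolute constant K > 0 such that the following holds. Let T be a positive integer, let z_1,…,z_T ≥ 0, u_1,…,u_T ≥ 0 and h_1,…,h_T, ĥ_1,…,ĥ_T > 0 with h_t ≤ ĥ_t for all t ∈ [T], and let z_max, u_max, ĥ_max denote the maxima of the respective sequences over t ∈ [T]. Suppose (β_t)_{t=1}^T are positive reals satisfying Rule 1: β_t = β_{t−1} + (1/ĥ_t)(2√(z_t/β_t) + u_t/β_t) for all t, with β_0 = 0. Then for every ε ≥ 1/T, F(β_{1:T}, z_{1:T}, u_{1:T}, h_{1:T}) ≤ K · [ min{ (∑_{t=1}^T √(z_t ĥ_t ln(εT)))^{2/3} + (√(z_max ĥ_max)/ε)^{2/3} , (∑_{t=1}^T √(z_t ĥ_max))^{2/3} } + min{ √(∑_{t=1}^T u_t ĥ_t ln(εT)) + √(u_max ĥ_max/ε) , √(∑_{t=1}^T u_t ĥ_max) } ]. -/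

import Mathlib

/-!
Write `g t = 2 √(z t / β t) + u t / β t`, so that Rule 1 reads `ĥ t (β t - β (t-1)) = g t`.
Since `h ≤ ĥ`, `F ≤ 2 ∑ g`, and the two parts of `∑ g` are bounded separately.

On rounds where `ĥ ≤ H`, Rule 1 forces the prefix sums of `√z` to stay below `(H/2) β^(3/2)` and
those of `u` below `H β^2`. Hence `∑ √z/√β` and `∑ u/β` are dominated by discrete versions of
`∫ dS / S^(1/3)` and `∫ dS / S^(1/2)`: `∑ 2 √(z/β) ≤ 3 (∑ √(z H))^(2/3)` and
`∑ u/β ≤ 2 √(∑ u H)`. With `H = ĥ_max` these are the logarithm-free bounds.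

For the logarithmic bounds the rounds are sorted into dyadic levels of `ĥ t / ĥ_max`. On each of the
first `n ≈ 2 log₂ (εT)` levels `H ≤ 2 ĥ t`, and Hölder's inequality over the levels costs a factor
`n^(1/3)`, resp. `n^(1/2)`. The rounds with `ĥ t ≤ ĥ_max / 2^n` are bounded crudely, using
`T / 2^n ≲ 1 / ε`.
-/

open Finset

/-- `F(β_{1:T}, z_{1:T}, u_{1:T}, h_{1:T})
  = ∑_{t=1}^T ( 2√(z_t/β_t) + u_t/β_t + (β_t − β_{t−1}) h_t )`, where `β 0 = 0`. -/
noncomputable def F (T : ℕ) (β z u h : ℕ → ℝ) : ℝ :=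
  ∑ t ∈ Finset.Icc 1 T,
    (2 * Real.sqrt (z t / β t) + u t / β t + (β t - β (t - 1)) * h t)

theorem mul_sub_le_rpow_mul_rpow_sub_rpow {a b q : ℝ} (hb : 0 ≤ b) (hba : b ≤ a)
    (hq0 : 0 < q) (hq1 : q ≤ 1) : q * (a - b) ≤ a ^ (1 - q) * (a ^ q - b ^ q) := by
  rcases (hb.trans hba).eq_or_lt with rfl | ha
  · obtain rfl : b = 0 := le_antisymm hba hb
    simp
  have bernoulli := rpow_one_add_le_one_add_mul_self (s := b / a - 1)
    (by linarith [div_nonneg hb ha.le]) hq0.le hq1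
  rw [add_sub_cancel, Real.div_rpow hb ha.le, div_le_iff₀ (by positivity)] at bernoulli
  have hsplit : a ^ (1 - q) * a ^ q = a := by
    rw [← Real.rpow_add ha, sub_add_cancel, Real.rpow_one]
  have key : a ^ (1 - q) * ((1 + q * (b / a - 1)) * a ^ q) = a + q * (b - a) := by
    rw [mul_left_comm, hsplit]
    field_simp
  have := mul_le_mul_of_nonneg_left bernoulli (Real.rpow_nonneg ha.le (1 - q))
  rw [key] at this
  linarith

theorem sum_rpow_le_card_rpow_mul_rpow_sum {ι : Type*} (s : Finset ι) {f : ι → ℝ} {q : ℝ}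
    (hq0 : 0 < q) (hq1 : q ≤ 1) (hf : ∀ i ∈ s, 0 ≤ f i) :
    ∑ i ∈ s, f i ^ q ≤ (#s : ℝ) ^ (1 - q) * (∑ i ∈ s, f i) ^ q := by
  have hpow := Real.rpow_sum_le_const_mul_sum_rpow_of_nonneg (s := s) (f := fun i => f i ^ q)
    (one_le_one_div hq0 hq1) fun i hi => Real.rpow_nonneg (hf i hi) q
  have hcancel : ∀ i ∈ s, (f i ^ q) ^ (1 / q) = f i := fun i hi => by
    rw [← Real.rpow_mul (hf i hi), mul_one_div_cancel hq0.ne', Real.rpow_one]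
  rw [sum_congr rfl hcancel] at hpow
  have hlhs : 0 ≤ ∑ i ∈ s, f i ^ q := sum_nonneg fun i hi => Real.rpow_nonneg (hf i hi) q
  calc ∑ i ∈ s, f i ^ q = ((∑ i ∈ s, f i ^ q) ^ (1 / q)) ^ q := by
        rw [← Real.rpow_mul hlhs, one_div_mul_cancel hq0.ne', Real.rpow_one]
    _ ≤ ((#s : ℝ) ^ (1 / q - 1) * ∑ i ∈ s, f i) ^ q := by gcongr
    _ = (#s : ℝ) ^ (1 - q) * (∑ i ∈ s, f i) ^ q := by
        rw [Real.mul_rpow (by positivity) (sum_nonneg hf), ← Real.rpow_mul (by positivity)]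
        congr 2
        field_simp

/-- A discrete form of `∫₀^S ds / s^(1-q) = S^q / q`, by concavity of `x ↦ x^q` at each step. -/
theorem mul_sum_div_le_rpow_sum {T : ℕ} {a w : ℕ → ℝ} {q c : ℝ} (hq0 : 0 < q) (hq1 : q ≤ 1)
    (hc : 0 ≤ c) (ha : ∀ t ∈ Icc 1 T, 0 ≤ a t)
    (hw : ∀ t ∈ Icc 1 T, (∑ s ∈ Icc 1 t, a s) ^ (1 - q) ≤ c * w t) :
    q * ∑ t ∈ Icc 1 T, a t / w t ≤ c * (∑ t ∈ Icc 1 T, a t) ^ q := by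
  induction T with
  | zero => simp [Real.zero_rpow hq0.ne']
  | succ T ih =>
    have hsub : Icc 1 T ⊆ Icc 1 (T + 1) := Icc_subset_Icc_right T.le_succ
    have hmem : T + 1 ∈ Icc 1 (T + 1) := by simp
    specialize ih (fun t ht => ha t (hsub ht)) (fun t ht => hw t (hsub ht))
    rw [sum_Icc_succ_top (by omega), sum_Icc_succ_top (by omega)] at *
    set S := ∑ t ∈ Icc 1 T, a t
    have hS : 0 ≤ S := sum_nonneg fun t ht => ha t (hsub ht)
    have haT := ha _ hmem
    have hwT := hw _ hmem
    rw [sum_Icc_succ_top (by omega)] at hwT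
    suffices q * (a (T + 1) / w (T + 1)) ≤ c * ((S + a (T + 1)) ^ q - S ^ q) by nlinarith
    rcases haT.eq_or_lt with h0 | hpos
    · rw [← h0, zero_div, mul_zero, add_zero, sub_self, mul_zero]
    have hS' : 0 < S + a (T + 1) := by positivity
    have hw0 : 0 < c * w (T + 1) := lt_of_lt_of_le (Real.rpow_pos_of_pos hS' _) hwT
    have hwpos : 0 < w (T + 1) := pos_of_mul_pos_right hw0 hc
    have hconc := mul_sub_le_rpow_mul_rpow_sub_rpow hS (le_add_of_nonneg_right haT) hq0 hq1
    rw [add_sub_cancel_left] at hconc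
    rw [mul_div_assoc', div_le_iff₀ hwpos]
    calc q * a (T + 1) ≤ (S + a (T + 1)) ^ (1 - q) * ((S + a (T + 1)) ^ q - S ^ q) := hconc
      _ ≤ c * w (T + 1) * ((S + a (T + 1)) ^ q - S ^ q) := by
          gcongr
          exact sub_nonneg.mpr (Real.rpow_le_rpow hS (le_add_of_nonneg_right haT) hq0.le)
      _ = _ := by ring

section Increments

variable {T : ℕ} {β : ℕ → ℝ}

theorem sum_Icc_sub_pred_eq (hβ0 : β 0 = 0) (t : ℕ) : ∑ s ∈ Icc 1 t, (β s - β (s - 1)) = β t := by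
  induction t with
  | zero => simp [hβ0]
  | succ t ih => rw [sum_Icc_succ_top (by omega), ih, Nat.add_sub_cancel, add_sub_cancel]

theorem le_of_pred_le (hβ0 : β 0 = 0) (hmono : ∀ t ∈ Icc 1 T, β (t - 1) ≤ β t)
    {s t : ℕ} (hst : s ≤ t) (ht : t ≤ T) : β s ≤ β t := by
  rw [← sum_Icc_sub_pred_eq hβ0 s, ← sum_Icc_sub_pred_eq hβ0 t]
  refine sum_le_sum_of_subset_of_nonneg (Icc_subset_Icc_right hst) fun i hi _ => ?_
  exact sub_nonneg.mpr (hmono i (Icc_subset_Icc_right ht hi))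

theorem nonneg_of_pred_le (hβ0 : β 0 = 0) (hmono : ∀ t ∈ Icc 1 T, β (t - 1) ≤ β t) {t : ℕ}
    (ht : t ≤ T) : 0 ≤ β t :=
  hβ0 ▸ le_of_pred_le hβ0 hmono t.zero_le ht

theorem sum_le_mul_rpow_one_add (hβ0 : β 0 = 0) (hmono : ∀ t ∈ Icc 1 T, β (t - 1) ≤ β t)
    {a : ℕ → ℝ} {C r : ℝ} (hC : 0 ≤ C) (hr : 0 ≤ r)
    (ha : ∀ t ∈ Icc 1 T, a t ≤ C * (β t - β (t - 1)) * β t ^ r) {t : ℕ} (ht : t ≤ T) :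
    ∑ s ∈ Icc 1 t, a s ≤ C * β t ^ (1 + r) := by
  have hβt := nonneg_of_pred_le hβ0 hmono ht
  calc ∑ s ∈ Icc 1 t, a s ≤ ∑ s ∈ Icc 1 t, C * β t ^ r * (β s - β (s - 1)) := by
        refine sum_le_sum fun s hs => ?_
        have hsT : s ∈ Icc 1 T := Icc_subset_Icc_right ht hs
        have hβs := nonneg_of_pred_le hβ0 hmono (mem_Icc.mp hsT).2
        have hpow : β s ^ r ≤ β t ^ r :=
          Real.rpow_le_rpow hβs (le_of_pred_le hβ0 hmono (mem_Icc.mp hs).2 ht) hr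
        have hΔ := sub_nonneg.mpr (hmono s hsT)
        calc a s ≤ C * (β s - β (s - 1)) * β s ^ r := ha s hsT
          _ ≤ C * (β s - β (s - 1)) * β t ^ r := by gcongr
          _ = _ := by ring
    _ = C * β t ^ (1 + r) := by
        rw [← mul_sum, sum_Icc_sub_pred_eq hβ0, Real.rpow_add' hβt (by positivity),
          Real.rpow_one]
        ring

theorem sum_div_rpow_le (hβ0 : β 0 = 0) (hmono : ∀ t ∈ Icc 1 T, β (t - 1) ≤ β t)
    {a : ℕ → ℝ} {C r : ℝ} (hC : 0 ≤ C) (hr : 0 < r) (ha0 : ∀ t ∈ Icc 1 T, 0 ≤ a t)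
    (ha : ∀ t ∈ Icc 1 T, a t ≤ C * (β t - β (t - 1)) * β t ^ r) :
    ∑ t ∈ Icc 1 T, a t / β t ^ r ≤ (1 + r) * (C ^ r * ∑ t ∈ Icc 1 T, a t) ^ (1 / (1 + r)) := by
  have hq0 : 0 < 1 / (1 + r) := by positivity
  have hq1 : 1 / (1 + r) ≤ 1 := by rw [div_le_one (by positivity)]; linarith
  have hexp : 1 - 1 / (1 + r) = r / (1 + r) := by field_simp; ring
  have hw : ∀ t ∈ Icc 1 T,
      (∑ s ∈ Icc 1 t, a s) ^ (1 - 1 / (1 + r)) ≤ C ^ (r / (1 + r)) * β t ^ r := by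
    intro t ht
    have hβt := nonneg_of_pred_le hβ0 hmono (mem_Icc.mp ht).2
    have hS : 0 ≤ ∑ s ∈ Icc 1 t, a s :=
      sum_nonneg fun s hs => ha0 s (Icc_subset_Icc_right (mem_Icc.mp ht).2 hs)
    calc (∑ s ∈ Icc 1 t, a s) ^ (1 - 1 / (1 + r))
        ≤ (C * β t ^ (1 + r)) ^ (r / (1 + r)) := by
          rw [hexp]
          gcongr
          exact sum_le_mul_rpow_one_add hβ0 hmono hC hr.le ha (mem_Icc.mp ht).2
      _ = C ^ (r / (1 + r)) * β t ^ r := by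
          rw [Real.mul_rpow hC (by positivity), ← Real.rpow_mul hβt]
          congr 2
          field_simp
  have key := mul_sum_div_le_rpow_sum hq0 hq1 (by positivity) ha0 hw
  rw [Real.mul_rpow (by positivity) (sum_nonneg ha0), ← Real.rpow_mul hC, mul_one_div]
  rw [one_div_mul_eq_div, div_le_iff₀ (by positivity)] at key
  linarith

end Increments

def RuleOne (T : ℕ) (z u hhat β : ℕ → ℝ) : Prop :=
  ∀ t ∈ Icc 1 T, β t = β (t - 1) + (1 / hhat t) * (2 * Real.sqrt (z t / β t) + u t / β t)

namespace RuleOne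

variable {T : ℕ} {z u hhat β : ℕ → ℝ}

theorem sub_pred_mul_eq (hhatpos : ∀ t ∈ Icc 1 T, 0 < hhat t) (rule : RuleOne T z u hhat β)
    {t : ℕ} (ht : t ∈ Icc 1 T) :
    (β t - β (t - 1)) * hhat t = 2 * Real.sqrt (z t / β t) + u t / β t := by
  rw [sub_eq_of_eq_add' (rule t ht)]
  field_simp [(hhatpos t ht).ne']

variable (hhatpos : ∀ t ∈ Icc 1 T, 0 < hhat t) (hβ : ∀ t ∈ Icc 1 T, 0 < β t)
  (rule : RuleOne T z u hhat β)
include hhatpos hβ rule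

theorem le_sub_pred_mul_mul {t : ℕ} (ht : t ∈ Icc 1 T) :
    u t ≤ (β t - β (t - 1)) * hhat t * β t := by
  rw [rule.sub_pred_mul_eq hhatpos ht, add_mul, div_mul_cancel₀ _ (hβ t ht).ne']
  have := Real.sqrt_nonneg (z t / β t)
  nlinarith [hβ t ht]

variable (hu : ∀ t ∈ Icc 1 T, 0 ≤ u t)
include hu

theorem pred_le {t : ℕ} (ht : t ∈ Icc 1 T) : β (t - 1) ≤ β t := by
  have h := rule.sub_pred_mul_eq hhatpos ht
  have : 0 ≤ 2 * Real.sqrt (z t / β t) + u t / β t :=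
    add_nonneg (by positivity) (div_nonneg (hu t ht) (hβ t ht).le)
  nlinarith [hhatpos t ht]

theorem two_sqrt_le_sub_pred_mul_mul {t : ℕ} (ht : t ∈ Icc 1 T) :
    2 * Real.sqrt (z t) ≤ (β t - β (t - 1)) * hhat t * Real.sqrt (β t) := by
  have hsβ : 0 < Real.sqrt (β t) := Real.sqrt_pos.mpr (hβ t ht)
  rw [rule.sub_pred_mul_eq hhatpos ht, Real.sqrt_div' _ (hβ t ht).le, add_mul, mul_assoc,
    div_mul_cancel₀ _ hsβ.ne']
  have := div_nonneg (hu t ht) (hβ t ht).le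
  nlinarith

end RuleOne

section Buckets

variable {T : ℕ} {z u hhat β : ℕ → ℝ} (hβ0 : β 0 = 0) (hhatpos : ∀ t ∈ Icc 1 T, 0 < hhat t)
  (hβ : ∀ t ∈ Icc 1 T, 0 < β t)
  (rule : RuleOne T z u hhat β)
  (hu : ∀ t ∈ Icc 1 T, 0 ≤ u t) (p : ℕ → Prop) [DecidablePred p] {H : ℝ} (hH : 0 ≤ H)
  (hpH : ∀ t ∈ Icc 1 T, p t → hhat t ≤ H)
include hβ0 hhatpos hβ rule hu hH hpH

theorem sum_filter_div_le :
    ∑ t ∈ Icc 1 T with p t, u t / β t ≤ 2 * Real.sqrt (∑ t ∈ Icc 1 T with p t, u t * H) := by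
  set a : ℕ → ℝ := fun t => if p t then u t else 0
  have ha0 : ∀ t ∈ Icc 1 T, 0 ≤ a t := fun t ht => by
    simp only [a]; split_ifs <;> simp [hu t ht]
  have ha : ∀ t ∈ Icc 1 T, a t ≤ H * (β t - β (t - 1)) * β t ^ (1 : ℝ) := fun t ht => by
    have hΔ := sub_nonneg.mpr (rule.pred_le hhatpos hβ hu ht)
    simp only [a, Real.rpow_one]
    split_ifs with hpt
    · calc u t ≤ (β t - β (t - 1)) * hhat t * β t := rule.le_sub_pred_mul_mul hhatpos hβ ht
        _ ≤ (β t - β (t - 1)) * H * β t := by gcongr; exacts [(hβ t ht).le, hpH t ht hpt]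
        _ = _ := by ring
    · exact mul_nonneg (mul_nonneg hH hΔ) (hβ t ht).le
  have key := sum_div_rpow_le hβ0 (fun t ht => rule.pred_le hhatpos hβ hu ht) hH one_pos
    ha0 ha
  simp only [Real.rpow_one, one_add_one_eq_two, ← Real.sqrt_eq_rpow] at key
  have hlhs : ∑ t ∈ Icc 1 T with p t, u t / β t = ∑ t ∈ Icc 1 T, a t / β t := by
    rw [sum_filter]; exact sum_congr rfl fun t _ => by simp only [a]; split_ifs <;> simp
  have hrhs : ∑ t ∈ Icc 1 T with p t, u t * H = H * ∑ t ∈ Icc 1 T, a t := by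
    rw [sum_filter, mul_sum]; exact sum_congr rfl fun t _ => by simp only [a]; split_ifs <;> ring
  rwa [hlhs, hrhs]

variable (hz : ∀ t ∈ Icc 1 T, 0 ≤ z t)
include hz

theorem sum_filter_two_sqrt_div_le :
    ∑ t ∈ Icc 1 T with p t, 2 * Real.sqrt (z t / β t)
      ≤ 3 * (∑ t ∈ Icc 1 T with p t, Real.sqrt (z t * H)) ^ (2 / 3 : ℝ) := by
  set a : ℕ → ℝ := fun t => if p t then Real.sqrt (z t) else 0
  have ha0 : ∀ t ∈ Icc 1 T, 0 ≤ a t := fun t _ => by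
    simp only [a]; split_ifs <;> positivity
  have ha : ∀ t ∈ Icc 1 T, a t ≤ H / 2 * (β t - β (t - 1)) * β t ^ (1 / 2 : ℝ) := fun t ht => by
    have hΔ := sub_nonneg.mpr (rule.pred_le hhatpos hβ hu ht)
    simp only [a, ← Real.sqrt_eq_rpow]
    split_ifs with hpt
    · have h2 := rule.two_sqrt_le_sub_pred_mul_mul hhatpos hβ hu ht
      have : (β t - β (t - 1)) * hhat t * Real.sqrt (β t)
          ≤ (β t - β (t - 1)) * H * Real.sqrt (β t) := by
        gcongr; exact hpH t ht hpt
      linarith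
    · positivity
  have key := sum_div_rpow_le hβ0 (fun t ht => rule.pred_le hhatpos hβ hu ht)
    (by positivity) one_half_pos ha0 ha
  have hlhs : ∑ t ∈ Icc 1 T with p t, 2 * Real.sqrt (z t / β t)
      = 2 * ∑ t ∈ Icc 1 T, a t / β t ^ (1 / 2 : ℝ) := by
    rw [sum_filter, mul_sum]
    refine sum_congr rfl fun t ht => ?_
    simp only [a, ← Real.sqrt_eq_rpow]
    split_ifs <;> simp [Real.sqrt_div' _ (hβ t ht).le]
  have hrhs : ∑ t ∈ Icc 1 T with p t, Real.sqrt (z t * H) = Real.sqrt H * ∑ t ∈ Icc 1 T, a t := by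
    rw [sum_filter, mul_sum]
    refine sum_congr rfl fun t ht => ?_
    simp only [a]
    split_ifs
    · rw [Real.sqrt_mul (hz t ht), mul_comm]
    · simp
  have hC : (H / 2) ^ (1 / 2 : ℝ) ≤ Real.sqrt H := by
    rw [Real.sqrt_eq_rpow]; gcongr; linarith
  rw [hlhs, hrhs]
  calc 2 * ∑ t ∈ Icc 1 T, a t / β t ^ (1 / 2 : ℝ)
      ≤ 3 * ((H / 2) ^ (1 / 2 : ℝ) * ∑ t ∈ Icc 1 T, a t) ^ (2 / 3 : ℝ) := by
        norm_num at key ⊢; linarith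
    _ ≤ 3 * (Real.sqrt H * ∑ t ∈ Icc 1 T, a t) ^ (2 / 3 : ℝ) := by gcongr

end Buckets

/-- `⌊log₂ x⌋` for `x ≥ 1`. -/
noncomputable def dyadicExponent (x : ℝ) : ℕ := Nat.log 2 ⌊x⌋₊

theorem two_pow_dyadicExponent_le {x : ℝ} (hx : 1 ≤ x) : (2 : ℝ) ^ dyadicExponent x ≤ x := by
  have hfloor : ⌊x⌋₊ ≠ 0 := (Nat.floor_pos.mpr hx).ne'
  calc (2 : ℝ) ^ dyadicExponent x ≤ ⌊x⌋₊ := by exact_mod_cast Nat.pow_log_le_self 2 hfloor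
    _ ≤ x := Nat.floor_le (by linarith)

theorem lt_two_pow_dyadicExponent_succ (x : ℝ) :
    x < 2 ^ (dyadicExponent x + 1) := by
  have h := Nat.lt_pow_succ_log_self one_lt_two ⌊x⌋₊
  calc x < ⌊x⌋₊ + 1 := Nat.lt_floor_add_one x
    _ ≤ 2 ^ (dyadicExponent x + 1) := by exact_mod_cast h

theorem dyadicExponent_sq_le_three_mul_log {x : ℝ} (hx : 1 ≤ x) :
    (dyadicExponent (x ^ 2) : ℝ) ≤ 3 * Real.log x := by
  have h := Real.log_le_log (by positivity) (two_pow_dyadicExponent_le (one_le_pow₀ hx (n := 2)))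
  rw [Real.log_pow, Real.log_pow] at h
  have hlog2 := Real.log_two_gt_d9
  have hlogx := Real.log_nonneg hx
  push_cast at h
  nlinarith

/-- For `0 < h ≤ H`, level `k < n` means `H / 2^(k+1) < h ≤ H / 2^k`, and level `n` collects
all `h ≤ H / 2^n`. -/
noncomputable def dyadicLevel (H : ℝ) (n : ℕ) (h : ℝ) : ℕ := min (dyadicExponent (H / h)) n

theorem le_div_two_pow_dyadicLevel {H h : ℝ} (n : ℕ) (hh : 0 < h) (hhH : h ≤ H) :
    h ≤ H / 2 ^ dyadicLevel H n h := by
  have hpow : (2 : ℝ) ^ dyadicLevel H n h ≤ H / h :=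
    (pow_le_pow_right₀ one_le_two (min_le_left _ _)).trans
      (two_pow_dyadicExponent_le ((one_le_div hh).mpr hhH))
  rw [le_div_iff₀ (by positivity)]
  rw [le_div_iff₀ hh] at hpow
  linarith

theorem div_two_pow_dyadicLevel_le {H h : ℝ} {n : ℕ} (hh : 0 < h)
    (hlt : dyadicLevel H n h < n) : H / 2 ^ dyadicLevel H n h ≤ 2 * h := by
  have hlevel : dyadicLevel H n h = dyadicExponent (H / h) := by
    unfold dyadicLevel at hlt ⊢; omega
  have h' := lt_two_pow_dyadicExponent_succ (H / h)
  rw [← hlevel, pow_succ, div_lt_iff₀ hh] at h'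
  rw [div_le_iff₀ (by positivity)]
  linarith

theorem sqrt_rpow_two_thirds {x : ℝ} (hx : 0 ≤ x) :
    Real.sqrt x ^ (2 / 3 : ℝ) = x ^ (1 / 3 : ℝ) := by
  rw [Real.sqrt_eq_rpow, ← Real.rpow_mul hx]
  norm_num

theorem sum_Icc_eq_sum_range_dyadicLevel (T n : ℕ) (H : ℝ) (h f : ℕ → ℝ) :
    ∑ t ∈ Icc 1 T, f t = ∑ k ∈ range n, ∑ t ∈ Icc 1 T with dyadicLevel H n (h t) = k, f t
      + ∑ t ∈ Icc 1 T with dyadicLevel H n (h t) = n, f t := by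
  rw [← sum_range_succ]
  exact (sum_fiberwise_of_maps_to
    (fun t _ => mem_range.mpr (Nat.lt_succ_of_le (min_le_right _ _))) f).symm

theorem sum_filter_Icc_le_mul (T : ℕ) (p : ℕ → Prop) [DecidablePred p] {f : ℕ → ℝ} {M : ℝ}
    (hM : 0 ≤ M) (hf : ∀ t ∈ Icc 1 T, p t → f t ≤ M) : ∑ t ∈ Icc 1 T with p t, f t ≤ T * M := by
  calc ∑ t ∈ Icc 1 T with p t, f t ≤ #{t ∈ Icc 1 T | p t} • M :=
        sum_le_card_nsmul _ _ _ fun t ht => hf t (mem_filter.mp ht).1 (mem_filter.mp ht).2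
    _ ≤ T * M := by
        rw [nsmul_eq_mul]
        gcongr
        exact_mod_cast (card_filter_le _ _).trans (by simp)

theorem three_mul_rpow_le_six_mul_rpow {n L W : ℝ} (hn0 : 0 ≤ n) (hnL : n ≤ 3 * L)
    (hW : 0 ≤ W) :
    3 * (n ^ (1 / 3 : ℝ) * (Real.sqrt 2 * W) ^ (2 / 3 : ℝ))
      ≤ 6 * (Real.sqrt L * W) ^ (2 / 3 : ℝ) := by
  have hL : 0 ≤ L := by linarith
  rw [Real.mul_rpow (by positivity) hW, Real.mul_rpow (by positivity) hW,
    sqrt_rpow_two_thirds zero_le_two, sqrt_rpow_two_thirds hL]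
  have height : (8 : ℝ) ^ (1 / 3 : ℝ) = 2 := by
    rw [show (8 : ℝ) = 2 ^ (3 : ℝ) by norm_num, ← Real.rpow_mul zero_le_two]
    norm_num
  have hcoef : n ^ (1 / 3 : ℝ) * 2 ^ (1 / 3 : ℝ) ≤ 2 * L ^ (1 / 3 : ℝ) := by
    rw [← Real.mul_rpow hn0 zero_le_two, ← height, ← Real.mul_rpow (by norm_num) hL]
    exact Real.rpow_le_rpow (by positivity) (by linarith) (by norm_num)
  have := Real.rpow_nonneg hW (2 / 3 : ℝ)
  nlinarith

theorem hhat_le_of_dyadicLevel_eq {T : ℕ} {hhat : ℕ → ℝ} {Hm : ℝ}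
    (hhatpos : ∀ t ∈ Icc 1 T, 0 < hhat t) (hHm : ∀ t ∈ Icc 1 T, hhat t ≤ Hm) (n : ℕ) {k : ℕ} :
    ∀ t ∈ Icc 1 T, dyadicLevel Hm n (hhat t) = k → hhat t ≤ Hm / 2 ^ k := by
  rintro t ht rfl
  exact le_div_two_pow_dyadicLevel n (hhatpos t ht) (hHm t ht)

section LogBounds

variable {T : ℕ} {z u hhat β : ℕ → ℝ} (hβ0 : β 0 = 0) (hhatpos : ∀ t ∈ Icc 1 T, 0 < hhat t)
  (hβ : ∀ t ∈ Icc 1 T, 0 < β t)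
  (rule : RuleOne T z u hhat β)
  (hu : ∀ t ∈ Icc 1 T, 0 ≤ u t) {Hm : ℝ} (hHm0 : 0 ≤ Hm) (hHm : ∀ t ∈ Icc 1 T, hhat t ≤ Hm)
  (n : ℕ)
include hβ0 hhatpos hβ rule hu hHm0 hHm

theorem sum_range_sum_two_sqrt_div_le (hz : ∀ t ∈ Icc 1 T, 0 ≤ z t) {L : ℝ}
    (hnL : (n : ℝ) ≤ 3 * L) :
    ∑ k ∈ range n, ∑ t ∈ Icc 1 T with dyadicLevel Hm n (hhat t) = k,
        2 * Real.sqrt (z t / β t)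
      ≤ 6 * (Real.sqrt L * ∑ t ∈ Icc 1 T, Real.sqrt (z t * hhat t)) ^ (2 / 3 : ℝ) := by
  set V : ℕ → ℝ := fun k =>
    ∑ t ∈ Icc 1 T with dyadicLevel Hm n (hhat t) = k, Real.sqrt (z t * hhat t)
  have hV : ∀ k ∈ range n, 0 ≤ Real.sqrt 2 * V k := fun k _ => by positivity
  have hbucket : ∀ k ∈ range n,
      ∑ t ∈ Icc 1 T with dyadicLevel Hm n (hhat t) = k, 2 * Real.sqrt (z t / β t)
        ≤ 3 * (Real.sqrt 2 * V k) ^ (2 / 3 : ℝ) := by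
    intro k hk
    refine (sum_filter_two_sqrt_div_le hβ0 hhatpos hβ rule hu _ (by positivity)
      (hhat_le_of_dyadicLevel_eq hhatpos hHm n) hz).trans ?_
    gcongr
    rw [mul_sum]
    refine sum_le_sum fun t ht => ?_
    obtain ⟨htT, rfl⟩ := mem_filter.mp ht
    rw [← Real.sqrt_mul zero_le_two]
    refine Real.sqrt_le_sqrt ?_
    have := mul_le_mul_of_nonneg_left
      (div_two_pow_dyadicLevel_le (H := Hm) (hhatpos t htT) (mem_range.mp hk)) (hz t htT)
    linarith
  have hsplit := sum_Icc_eq_sum_range_dyadicLevel T n Hm hhat fun t => Real.sqrt (z t * hhat t)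
  have htop : 0 ≤ ∑ t ∈ Icc 1 T with dyadicLevel Hm n (hhat t) = n, Real.sqrt (z t * hhat t) :=
    sum_nonneg fun _ _ => Real.sqrt_nonneg _
  calc _ ≤ ∑ k ∈ range n, 3 * (Real.sqrt 2 * V k) ^ (2 / 3 : ℝ) := sum_le_sum hbucket
    _ = 3 * ∑ k ∈ range n, (Real.sqrt 2 * V k) ^ (2 / 3 : ℝ) := (mul_sum _ _ _).symm
    _ ≤ 3 * ((n : ℝ) ^ (1 / 3 : ℝ) * (∑ k ∈ range n, Real.sqrt 2 * V k) ^ (2 / 3 : ℝ)) := by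
        have := sum_rpow_le_card_rpow_mul_rpow_sum (range n) (q := 2 / 3) (by norm_num)
          (by norm_num) hV
        norm_num at this ⊢
        linarith
    _ ≤ 3 * ((n : ℝ) ^ (1 / 3 : ℝ)
          * (Real.sqrt 2 * ∑ t ∈ Icc 1 T, Real.sqrt (z t * hhat t)) ^ (2 / 3 : ℝ)) := by
        rw [← mul_sum]
        gcongr
        linarith
    _ ≤ _ := three_mul_rpow_le_six_mul_rpow n.cast_nonneg hnL (sum_nonneg fun _ _ => by positivity)

theorem sum_two_sqrt_div_top_level_le (hz : ∀ t ∈ Icc 1 T, 0 ≤ z t) {Zm ε : ℝ}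
    (hZm : ∀ t ∈ Icc 1 T, z t ≤ Zm) (hε : 0 < ε) (hn : (ε * T) ^ 2 < 2 ^ (n + 1)) :
    ∑ t ∈ Icc 1 T with dyadicLevel Hm n (hhat t) = n, 2 * Real.sqrt (z t / β t)
      ≤ 6 * (Real.sqrt (Zm * Hm) / ε) ^ (2 / 3 : ℝ) := by
  refine (sum_filter_two_sqrt_div_le hβ0 hhatpos hβ rule hu _ (by positivity)
    (hhat_le_of_dyadicLevel_eq hhatpos hHm n) hz).trans ?_
  have hcrude : ∑ t ∈ Icc 1 T with dyadicLevel Hm n (hhat t) = n, Real.sqrt (z t * (Hm / 2 ^ n))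
      ≤ T * (Real.sqrt (Zm * Hm) / Real.sqrt (2 ^ n)) := by
    refine sum_filter_Icc_le_mul T _ (by positivity) fun t ht _ => ?_
    rw [← Real.sqrt_div' _ (by positivity), mul_div_assoc]
    gcongr
    exact hZm t ht
  have hεT : ε * T < Real.sqrt 2 * Real.sqrt (2 ^ n) := by
    rw [← Real.sqrt_mul zero_le_two, ← pow_succ', Real.lt_sqrt (by positivity)]
    exact hn
  have hscale : T * (Real.sqrt (Zm * Hm) / Real.sqrt (2 ^ n))
      ≤ Real.sqrt 2 * (Real.sqrt (Zm * Hm) / ε) := by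
    rw [mul_div_assoc', mul_div_assoc', div_le_div_iff₀ (by positivity) hε]
    nlinarith [mul_le_mul_of_nonneg_left hεT.le (Real.sqrt_nonneg (Zm * Hm))]
  have htwo : (2 : ℝ) ^ (1 / 3 : ℝ) ≤ 2 :=
    Real.rpow_le_self_of_one_le one_le_two (by norm_num)
  calc 3 * (∑ t ∈ Icc 1 T with dyadicLevel Hm n (hhat t) = n, Real.sqrt (z t * (Hm / 2 ^ n)))
        ^ (2 / 3 : ℝ)
      ≤ 3 * (Real.sqrt 2 * (Real.sqrt (Zm * Hm) / ε)) ^ (2 / 3 : ℝ) := by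
        gcongr
        exact hcrude.trans hscale
    _ ≤ 6 * (Real.sqrt (Zm * Hm) / ε) ^ (2 / 3 : ℝ) := by
        rw [Real.mul_rpow (by positivity) (by positivity), sqrt_rpow_two_thirds zero_le_two]
        have := Real.rpow_nonneg (by positivity : 0 ≤ Real.sqrt (Zm * Hm) / ε) (2 / 3 : ℝ)
        nlinarith

theorem sum_range_sum_div_le {L : ℝ} (hnL : (n : ℝ) ≤ 3 * L) :
    ∑ k ∈ range n, ∑ t ∈ Icc 1 T with dyadicLevel Hm n (hhat t) = k, u t / β t
      ≤ 6 * Real.sqrt (L * ∑ t ∈ Icc 1 T, u t * hhat t) := by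
  set Q : ℕ → ℝ := fun k => ∑ t ∈ Icc 1 T with dyadicLevel Hm n (hhat t) = k, u t * hhat t
  have hQ : ∀ k ∈ range n, 0 ≤ 2 * Q k := fun k _ =>
    mul_nonneg zero_le_two (sum_nonneg fun t ht =>
      mul_nonneg (hu t (mem_filter.mp ht).1) (hhatpos t (mem_filter.mp ht).1).le)
  have hbucket : ∀ k ∈ range n,
      ∑ t ∈ Icc 1 T with dyadicLevel Hm n (hhat t) = k, u t / β t ≤ 2 * Real.sqrt (2 * Q k) := by
    intro k hk
    refine (sum_filter_div_le hβ0 hhatpos hβ rule hu _ (by positivity)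
      (hhat_le_of_dyadicLevel_eq hhatpos hHm n)).trans ?_
    gcongr
    rw [mul_sum]
    refine sum_le_sum fun t ht => ?_
    obtain ⟨htT, rfl⟩ := mem_filter.mp ht
    have := mul_le_mul_of_nonneg_left
      (div_two_pow_dyadicLevel_le (H := Hm) (hhatpos t htT) (mem_range.mp hk)) (hu t htT)
    linarith
  have hsplit := sum_Icc_eq_sum_range_dyadicLevel T n Hm hhat fun t => u t * hhat t
  have htop : 0 ≤ ∑ t ∈ Icc 1 T with dyadicLevel Hm n (hhat t) = n, u t * hhat t :=
    sum_nonneg fun t ht =>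
      mul_nonneg (hu t (mem_filter.mp ht).1) (hhatpos t (mem_filter.mp ht).1).le
  have hL : 0 ≤ L := by linarith [n.cast_nonneg (α := ℝ)]
  have hpm := sum_rpow_le_card_rpow_mul_rpow_sum (range n) (q := 1 / 2) (by norm_num)
    (by norm_num) hQ
  rw [card_range, show (1 : ℝ) - 1 / 2 = 1 / 2 by norm_num,
    ← Real.mul_rpow n.cast_nonneg (sum_nonneg hQ)] at hpm
  simp only [← Real.sqrt_eq_rpow] at hpm
  calc _ ≤ ∑ k ∈ range n, 2 * Real.sqrt (2 * Q k) := sum_le_sum hbucket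
    _ = 2 * ∑ k ∈ range n, Real.sqrt (2 * Q k) := (mul_sum _ _ _).symm
    _ ≤ 2 * Real.sqrt (n * ∑ k ∈ range n, 2 * Q k) := by gcongr
    _ ≤ 2 * Real.sqrt (9 * (L * ∑ t ∈ Icc 1 T, u t * hhat t)) := by
        have hQS : ∑ k ∈ range n, Q k ≤ ∑ t ∈ Icc 1 T, u t * hhat t := by linarith
        have hQ0 : 0 ≤ ∑ k ∈ range n, Q k := by linarith [sum_nonneg hQ, mul_sum (range n) Q 2]
        rw [← mul_sum]
        gcongr 2 * Real.sqrt ?_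
        nlinarith [mul_le_mul hnL hQS hQ0 (by linarith : 0 ≤ 3 * L)]
    _ = 6 * Real.sqrt (L * ∑ t ∈ Icc 1 T, u t * hhat t) := by
        rw [Real.sqrt_mul (by norm_num), show (9 : ℝ) = 3 ^ 2 by norm_num,
          Real.sqrt_sq (by norm_num)]
        ring

theorem sum_div_top_level_le {Um ε : ℝ} (hUm : ∀ t ∈ Icc 1 T, u t ≤ Um) (hεT : 1 ≤ ε * T)
    (hn : (ε * T) ^ 2 < 2 ^ (n + 1)) :
    ∑ t ∈ Icc 1 T with dyadicLevel Hm n (hhat t) = n, u t / β t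
      ≤ 6 * Real.sqrt (Um * Hm / ε) := by
  have hT : 1 ≤ T := Nat.one_le_iff_ne_zero.mpr fun h => by simp [h] at hεT; linarith
  have hUm0 : 0 ≤ Um := (hu 1 (by simp [hT])).trans (hUm 1 (by simp [hT]))
  have hε : 0 < ε := pos_of_mul_pos_left (by linarith) T.cast_nonneg
  refine (sum_filter_div_le hβ0 hhatpos hβ rule hu _ (by positivity)
    (hhat_le_of_dyadicLevel_eq hhatpos hHm n)).trans ?_
  have hcrude : ∑ t ∈ Icc 1 T with dyadicLevel Hm n (hhat t) = n, u t * (Hm / 2 ^ n)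
      ≤ T * (Um * (Hm / 2 ^ n)) :=
    sum_filter_Icc_le_mul T _ (by positivity) fun t ht _ => by gcongr; exact hUm t ht
  have hscale : T * (Um * (Hm / 2 ^ n)) ≤ 9 * (Um * Hm / ε) := by
    have h2n : ε * T ≤ 2 ^ (n + 1) := by nlinarith
    rw [mul_div_assoc', mul_div_assoc', mul_div_assoc', div_le_div_iff₀ (by positivity) hε]
    rw [pow_succ] at h2n
    nlinarith [mul_nonneg hUm0 hHm0]
  calc 2 * Real.sqrt (∑ t ∈ Icc 1 T with dyadicLevel Hm n (hhat t) = n, u t * (Hm / 2 ^ n))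
      ≤ 2 * Real.sqrt (9 * (Um * Hm / ε)) := by gcongr; exact hcrude.trans hscale
    _ = 6 * Real.sqrt (Um * Hm / ε) := by
        rw [Real.sqrt_mul (by norm_num), show (9 : ℝ) = 3 ^ 2 by norm_num,
          Real.sqrt_sq (by norm_num)]
        ring

variable {ε : ℝ} (hεT : 1 ≤ ε * T)
include hεT

theorem sum_two_sqrt_div_le_log (hz : ∀ t ∈ Icc 1 T, 0 ≤ z t) {Zm : ℝ}
    (hZm : ∀ t ∈ Icc 1 T, z t ≤ Zm) :
    ∑ t ∈ Icc 1 T, 2 * Real.sqrt (z t / β t)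
      ≤ 6 * ((∑ t ∈ Icc 1 T, Real.sqrt (z t * hhat t * Real.log (ε * T))) ^ (2 / 3 : ℝ)
        + (Real.sqrt (Zm * Hm) / ε) ^ (2 / 3 : ℝ)) := by
  set n := dyadicExponent ((ε * T) ^ 2)
  have hlog : ∑ t ∈ Icc 1 T, Real.sqrt (z t * hhat t * Real.log (ε * T))
      = Real.sqrt (Real.log (ε * T)) * ∑ t ∈ Icc 1 T, Real.sqrt (z t * hhat t) := by
    rw [mul_sum]
    exact sum_congr rfl fun t ht => by
      rw [Real.sqrt_mul (mul_nonneg (hz t ht) (hhatpos t ht).le), mul_comm]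
  rw [sum_Icc_eq_sum_range_dyadicLevel T n Hm hhat, hlog, mul_add]
  exact add_le_add
    (sum_range_sum_two_sqrt_div_le hβ0 hhatpos hβ rule hu hHm0 hHm n hz
      (dyadicExponent_sq_le_three_mul_log hεT))
    (sum_two_sqrt_div_top_level_le hβ0 hhatpos hβ rule hu hHm0 hHm n hz hZm
      (pos_of_mul_pos_left (by linarith) T.cast_nonneg) (lt_two_pow_dyadicExponent_succ _))

theorem sum_div_le_log {Um : ℝ} (hUm : ∀ t ∈ Icc 1 T, u t ≤ Um) :
    ∑ t ∈ Icc 1 T, u t / β t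
      ≤ 6 * (Real.sqrt (∑ t ∈ Icc 1 T, u t * hhat t * Real.log (ε * T))
        + Real.sqrt (Um * Hm / ε)) := by
  set n := dyadicExponent ((ε * T) ^ 2)
  rw [sum_Icc_eq_sum_range_dyadicLevel T n Hm hhat, ← sum_mul, mul_comm _ (Real.log _), mul_add]
  exact add_le_add
    (sum_range_sum_div_le hβ0 hhatpos hβ rule hu hHm0 hHm n
      (dyadicExponent_sq_le_three_mul_log hεT))
    (sum_div_top_level_le hβ0 hhatpos hβ rule hu hHm0 hHm n hUm hεT
      (lt_two_pow_dyadicExponent_succ _))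

end LogBounds

theorem F_le_two_mul_sum {T : ℕ} {z u h hhat β : ℕ → ℝ} (hu : ∀ t ∈ Icc 1 T, 0 ≤ u t)
    (hhatpos : ∀ t ∈ Icc 1 T, 0 < hhat t) (hh : ∀ t ∈ Icc 1 T, h t ≤ hhat t)
    (hβ : ∀ t ∈ Icc 1 T, 0 < β t)
    (rule : RuleOne T z u hhat β) :
    F T β z u h
      ≤ 2 * (∑ t ∈ Icc 1 T, 2 * Real.sqrt (z t / β t) + ∑ t ∈ Icc 1 T, u t / β t) := by
  rw [F, ← sum_add_distrib, mul_sum]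
  refine sum_le_sum fun t ht => ?_
  have hΔ := sub_nonneg.mpr (rule.pred_le hhatpos hβ hu ht)
  have := mul_le_mul_of_nonneg_left (hh t ht) hΔ
  linarith [rule.sub_pred_mul_eq hhatpos ht]

theorem stmt_5 :
    ∃ K : ℝ, 0 < K ∧
      ∀ (T : ℕ) (hT : 1 ≤ T) (z u h hhat β : ℕ → ℝ),
        (∀ t ∈ Finset.Icc 1 T, 0 ≤ z t) →
        (∀ t ∈ Finset.Icc 1 T, 0 ≤ u t) →
        (∀ t ∈ Finset.Icc 1 T, 0 < h t) →
        (∀ t ∈ Finset.Icc 1 T, 0 < hhat t) →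
        (∀ t ∈ Finset.Icc 1 T, h t ≤ hhat t) →
        (∀ t ∈ Finset.Icc 1 T, 0 < β t) →
        β 0 = 0 →
        (∀ t ∈ Finset.Icc 1 T,
          β t = β (t - 1) + (1 / hhat t) * (2 * Real.sqrt (z t / β t) + u t / β t)) →
        ∀ ε : ℝ, 1 / (T : ℝ) ≤ ε →
          F T β z u h ≤ K *
            (min
              ((∑ t ∈ Finset.Icc 1 T,
                  Real.sqrt (z t * hhat t * Real.log (ε * T))) ^ ((2 : ℝ) / 3)
                + (Real.sqrt
                      (((Finset.Icc 1 T).sup' (Finset.nonempty_Icc.mpr hT) z)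
                        * ((Finset.Icc 1 T).sup' (Finset.nonempty_Icc.mpr hT) hhat)) / ε)
                    ^ ((2 : ℝ) / 3))
              ((∑ t ∈ Finset.Icc 1 T,
                  Real.sqrt (z t
                    * ((Finset.Icc 1 T).sup' (Finset.nonempty_Icc.mpr hT) hhat)))
                ^ ((2 : ℝ) / 3))
            + min
              (Real.sqrt (∑ t ∈ Finset.Icc 1 T, u t * hhat t * Real.log (ε * T))
                + Real.sqrt
                    (((Finset.Icc 1 T).sup' (Finset.nonempty_Icc.mpr hT) u)
                      * ((Finset.Icc 1 T).sup' (Finset.nonempty_Icc.mpr hT) hhat) / ε))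
              (Real.sqrt (∑ t ∈ Finset.Icc 1 T,
                  u t * ((Finset.Icc 1 T).sup' (Finset.nonempty_Icc.mpr hT) hhat)))) := by
  refine ⟨12, by norm_num, fun T hT z u h hhat β hz hu _ hhatpos hh hβ hβ0 rule ε hε => ?_⟩
  have hne := nonempty_Icc.mpr hT
  have hHm : ∀ t ∈ Icc 1 T, hhat t ≤ (Icc 1 T).sup' hne hhat := fun t ht => le_sup' hhat ht
  have hone : 1 ∈ Icc 1 T := by simp [hT]
  have hHm0 : 0 ≤ (Icc 1 T).sup' hne hhat := (hhatpos 1 hone).le.trans (hHm 1 hone)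
  have hεT : 1 ≤ ε * T := by rw [div_le_iff₀ (by positivity)] at hε; linarith
  have hX2 := sum_filter_two_sqrt_div_le hβ0 hhatpos hβ rule hu (fun _ => True) hHm0
    (fun t ht _ => hHm t ht) hz
  have hY2 := sum_filter_div_le hβ0 hhatpos hβ rule hu (fun _ => True) hHm0
    (fun t ht _ => hHm t ht)
  rw [filter_true] at hX2 hY2
  have hX1 := sum_two_sqrt_div_le_log hβ0 hhatpos hβ rule hu hHm0 hHm hεT hz
    (Zm := (Icc 1 T).sup' hne z) fun t ht => le_sup' z ht
  have hY1 := sum_div_le_log hβ0 hhatpos hβ rule hu hHm0 hHm hεT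
    (Um := (Icc 1 T).sup' hne u) fun t ht => le_sup' u ht
  have hX := le_min hX1
    (hX2.trans (mul_le_mul_of_nonneg_right (by norm_num : (3 : ℝ) ≤ 6) (by positivity)))
  have hY := le_min hY1
    (hY2.trans (mul_le_mul_of_nonneg_right (by norm_num : (2 : ℝ) ≤ 6) (by positivity)))
  rw [← mul_min_of_nonneg _ _ (by norm_num)] at hX hY
  linarith [F_le_two_mul_sum hu hhatpos hh hβ rule]
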